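/- arXiv:2408.06961 — 2 statements merged into one kernel-verified Lean document; each statement's English description precedes it below -/
import Mathlib

section
/- Chain of inclusions: in the abstract ER setting with monotone operators F_h ⊆ F on equivalence relations over a finite set S, if the set of solutions is nonempty then LB ⊆ CM ⊆ PM ⊆ UB, where LB is the least equivalence relation closed under F_h, UB the least equivalence relation closed under F, and solutions are candidate solutions (built from F) satisfying F_h(E) ⊆ E and an arbitrary downward-irrelevant constraint predicate. -/
/-!
Every candidate is an equivalence relation on `S`, so a solution is in particular an
`Fh`-closed equivalence relation and contains `LB`. Conversely, a candidate is built by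
merging pairs that `F` produces, so by induction along its construction it lies inside
every `F`-closed equivalence relation, and hence inside `UB`. Finally, solutions are
subsets of the finite set `S ×ˢ S`, so a nonempty family of them has a maximal member,
through which `CM ⊆ PM`.
-/

/-- `E` is an equivalence relation on the set `S`, viewed as a set of pairs. -/
def IsEquivOn {α : Type*} (S : Set α) (E : Set (α × α)) : Prop :=
  E ⊆ S ×ˢ S ∧ (∀ x ∈ S, (x, x) ∈ E) ∧ (∀ x y, (x, y) ∈ E → (y, x) ∈ E) ∧
    (∀ x y z, (x, y) ∈ E → (y, z) ∈ E → (x, z) ∈ E)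

/-- `eqRel P S` : the intersection of all equivalence relations on `S` containing `P`. -/
def eqRel {α : Type*} (P : Set (α × α)) (S : Set α) : Set (α × α) :=
  ⋂₀ {E | IsEquivOn S E ∧ P ⊆ E}

/-- Candidate solutions for the abstract ER system with rule operator `F`. -/
inductive Cand {α : Type*} (S : Set α) (F : Set (α × α) → Set (α × α)) :
    Set (α × α) → Prop
  | base : Cand S F (eqRel ∅ S)
  | step (E' : Set (α × α)) (a : α × α) (hE' : Cand S F E') (ha : a ∈ F E') (hna : a ∉ E') :
      Cand S F (eqRel (insert a E') S)

section

variable {α : Type*} {S : Set α}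

lemma isEquivOn_prod_self (S : Set α) : IsEquivOn S (S ×ˢ S) :=
  ⟨subset_rfl, fun _ hx => ⟨hx, hx⟩, fun _ _ h => ⟨h.2, h.1⟩, fun _ _ _ h₁ h₂ => ⟨h₁.1, h₂.2⟩⟩

lemma eqRel_subset {P E : Set (α × α)} (hE : IsEquivOn S E) (hP : P ⊆ E) : eqRel P S ⊆ E :=
  Set.sInter_subset_of_mem ⟨hE, hP⟩

lemma isEquivOn_eqRel {P : Set (α × α)} (hP : P ⊆ S ×ˢ S) : IsEquivOn S (eqRel P S) := by
  refine ⟨eqRel_subset (isEquivOn_prod_self S) hP, ?refl, ?symm, ?trans⟩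
  case refl => exact fun x hx => Set.mem_sInter.2 fun E hE => hE.1.2.1 x hx
  case symm =>
    exact fun x y h => Set.mem_sInter.2 fun E hE => hE.1.2.2.1 x y (Set.mem_sInter.1 h E hE)
  case trans =>
    exact fun x y z h₁ h₂ => Set.mem_sInter.2 fun E hE =>
      hE.1.2.2.2 x y z (Set.mem_sInter.1 h₁ E hE) (Set.mem_sInter.1 h₂ E hE)

namespace Cand

variable {F : Set (α × α) → Set (α × α)} {E : Set (α × α)}

lemma isEquivOn (hrange : ∀ E, F E ⊆ S ×ˢ S) (h : Cand S F E) : IsEquivOn S E := by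
  induction h with
  | base => exact isEquivOn_eqRel (Set.empty_subset _)
  | step E' a _ ha _ ih => exact isEquivOn_eqRel (Set.insert_subset (hrange E' ha) ih.1)

lemma subset_of_closed (hFmono : Monotone F) (h : Cand S F E) {U : Set (α × α)}
    (hU : IsEquivOn S U) (hFU : F U ⊆ U) : E ⊆ U := by
  induction h with
  | base => exact eqRel_subset hU (Set.empty_subset _)
  | step _ _ _ ha _ ih => exact eqRel_subset hU (Set.insert_subset (hFU (hFmono ih ha)) ih)

lemma setOf_finite (hS : S.Finite) (hrange : ∀ E, F E ⊆ S ×ˢ S) :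
    {E | Cand S F E}.Finite :=
  (hS.prod hS).finite_subsets.subset fun _ hE => (isEquivOn hrange hE).1

end Cand

lemma exists_not_ssubset_of_finite {𝒜 : Set (Set α)} (h𝒜 : 𝒜.Finite) (hne : 𝒜.Nonempty) :
    ∃ M ∈ 𝒜, ∀ E ∈ 𝒜, ¬ M ⊂ E := by
  obtain ⟨M, hM⟩ := h𝒜.exists_maximal hne
  exact ⟨M, hM.prop, fun _ hE => hM.not_gt hE⟩

end

theorem lb_cm_pm_ub_general {α : Type*} (S : Set α) (hS : S.Finite)
    (Fh F : Set (α × α) → Set (α × α))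
    (hFmono : ∀ E E' : Set (α × α), E ⊆ E' → F E ⊆ F E')
    (hrange : ∀ E : Set (α × α), F E ⊆ S ×ˢ S)
    (C : Set (α × α) → Prop)
    (Sol : Set (Set (α × α)))
    (hSolDef : Sol = {E | Cand S F E ∧ Fh E ⊆ E ∧ C E})
    (hne : Sol.Nonempty) :
    (⋂₀ {E' | IsEquivOn S E' ∧ Fh E' ⊆ E'}) ⊆
        (⋂₀ {M | M ∈ Sol ∧ ∀ E' ∈ Sol, ¬ M ⊂ E'}) ∧
      (⋂₀ {M | M ∈ Sol ∧ ∀ E' ∈ Sol, ¬ M ⊂ E'}) ⊆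
        (⋃₀ {M | M ∈ Sol ∧ ∀ E' ∈ Sol, ¬ M ⊂ E'}) ∧
      (⋃₀ {M | M ∈ Sol ∧ ∀ E' ∈ Sol, ¬ M ⊂ E'}) ⊆
        ⋂₀ {E' | IsEquivOn S E' ∧ F E' ⊆ E'} := by
  have hSol : ∀ M ∈ Sol, Cand S F M ∧ Fh M ⊆ M := by
    subst hSolDef
    exact fun M hM => ⟨hM.1, hM.2.1⟩
  have hSolFinite : Sol.Finite :=
    (Cand.setOf_finite hS hrange).subset fun M hM => (hSol M hM).1
  obtain ⟨M, hMmax⟩ := exists_not_ssubset_of_finite hSolFinite hne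
  refine ⟨?lb_cm, ?cm_pm, ?pm_ub⟩
  case lb_cm =>
    exact Set.subset_sInter fun M hM => Set.sInter_subset_of_mem
      ⟨(hSol M hM.1).1.isEquivOn hrange, (hSol M hM.1).2⟩
  case cm_pm => exact (Set.sInter_subset_of_mem hMmax).trans (Set.subset_sUnion_of_mem hMmax)
  case pm_ub =>
    exact Set.sUnion_subset fun M hM => Set.subset_sInter fun U hU =>
      (hSol M hM.1).1.subset_of_closed hFmono hU.1 hU.2

/-- Chain of inclusions `LB ⊆ CM ⊆ PM ⊆ UB`, where solutions are candidate solutions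
(built from `F`) satisfying the hard rules `Fh` and an arbitrary constraint predicate. -/
theorem lb_cm_pm_ub {α : Type*} (S : Set α) (hS : S.Finite)
    (Fh F : Set (α × α) → Set (α × α))
    (hsub : ∀ E : Set (α × α), Fh E ⊆ F E)
    (hFhmono : ∀ E E' : Set (α × α), E ⊆ E' → Fh E ⊆ Fh E')
    (hFmono : ∀ E E' : Set (α × α), E ⊆ E' → F E ⊆ F E')
    (hrange : ∀ E : Set (α × α), F E ⊆ S ×ˢ S)
    (C : Set (α × α) → Prop)
    (Sol : Set (Set (α × α)))
    (hSolDef : Sol = {E | Cand S F E ∧ Fh E ⊆ E ∧ C E})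
    (hne : Sol.Nonempty) :
    (⋂₀ {E' | IsEquivOn S E' ∧ Fh E' ⊆ E'}) ⊆
        (⋂₀ {M | M ∈ Sol ∧ ∀ E' ∈ Sol, ¬ M ⊂ E'}) ∧
      (⋂₀ {M | M ∈ Sol ∧ ∀ E' ∈ Sol, ¬ M ⊂ E'}) ⊆
        (⋃₀ {M | M ∈ Sol ∧ ∀ E' ∈ Sol, ¬ M ⊂ E'}) ∧
      (⋃₀ {M | M ∈ Sol ∧ ∀ E' ∈ Sol, ¬ M ⊂ E'}) ⊆
        ⋂₀ {E' | IsEquivOn S E' ∧ F E' ⊆ E'} :=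
  lb_cm_pm_ub_general S hS Fh F hFmono hrange C Sol hSolDef hne
end

section
/- Single-step closure lemma: if E is an equivalence relation on S and α = (c,d) ∈ S × S, then EqRel(E ∪ {α}, S) equals E ∪ {(x,y) : (x,c) ∈ E and (d,y) ∈ E} ∪ {(x,y) : (x,d) ∈ E and (c,y) ∈ E}. -/
/-- Single-step closure: adding one pair `(c, d)` to an equivalence relation `E` on `S`
and closing yields exactly `E` together with the pairs obtained by bridging through
`(c, d)` or `(d, c)`. -/
theorem eqRel_insert_single {α : Type*} (S : Set α) (E : Set (α × α))
    (hE : IsEquivOn S E) (c d : α) (hc : c ∈ S) (hd : d ∈ S) :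
    eqRel (insert (c, d) E) S =
      E ∪ {p : α × α | (p.1, c) ∈ E ∧ (d, p.2) ∈ E} ∪
        {p : α × α | (p.1, d) ∈ E ∧ (c, p.2) ∈ E} := by
  obtain ⟨hsub, hrefl, hsymm, htrans⟩ := hE
  set F : Set (α × α) := E ∪ {p : α × α | (p.1, c) ∈ E ∧ (d, p.2) ∈ E} ∪
        {p : α × α | (p.1, d) ∈ E ∧ (c, p.2) ∈ E} with hF
  have hmemS : ∀ p ∈ F, p.1 ∈ S ∧ p.2 ∈ S := by
    rintro ⟨x, y⟩ ((h | h) | h)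
    · exact ⟨(hsub h).1, (hsub h).2⟩
    · exact ⟨(hsub h.1).1, (hsub h.2).2⟩
    · exact ⟨(hsub h.1).1, (hsub h.2).2⟩
  have hFeq : IsEquivOn S F := by
    refine ⟨?_, ?_, ?_, ?_⟩
    · rintro ⟨x, y⟩ hp
      exact Set.mk_mem_prod (hmemS _ hp).1 (hmemS _ hp).2
    · intro x hx; exact Or.inl (Or.inl (hrefl x hx))
    · rintro x y ((h | h) | h)
      · exact Or.inl (Or.inl (hsymm _ _ h))
      · exact Or.inr ⟨hsymm _ _ h.2, hsymm _ _ h.1⟩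
      · exact Or.inl (Or.inr ⟨hsymm _ _ h.2, hsymm _ _ h.1⟩)
    · rintro x y z ((h | h) | h) ((h' | h') | h')
      · exact Or.inl (Or.inl (htrans _ _ _ h h'))
      · exact Or.inl (Or.inr ⟨htrans _ _ _ h h'.1, h'.2⟩)
      · exact Or.inr ⟨htrans _ _ _ h h'.1, h'.2⟩
      · exact Or.inl (Or.inr ⟨h.1, htrans _ _ _ h.2 h'⟩)
      · exact Or.inr ⟨htrans _ _ _ h.1 (hsymm _ _ (htrans _ _ _ h.2 h'.1)),
          htrans _ _ _ (hsymm _ _ (htrans _ _ _ h.2 h'.1)) h'.2⟩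
      · exact Or.inl (Or.inl (htrans _ _ _ h.1 h'.2))
      · exact Or.inr ⟨h.1, htrans _ _ _ h.2 h'⟩
      · exact Or.inl (Or.inl (htrans _ _ _ h.1 h'.2))
      · exact Or.inl (Or.inr ⟨htrans _ _ _ h.1 (hsymm _ _ (htrans _ _ _ h.2 h'.1)),
          htrans _ _ _ (hsymm _ _ (htrans _ _ _ h.2 h'.1)) h'.2⟩)
  apply subset_antisymm
  · exact Set.sInter_subset_of_mem ⟨hFeq, by
      rintro p (rfl | hp)
      · exact Or.inl (Or.inr ⟨hrefl c hc, hrefl d hd⟩)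
      · exact Or.inl (Or.inl hp)⟩
  · rintro ⟨x, y⟩ hp E' ⟨⟨_, hr', hs', ht'⟩, hP'⟩
    have hE' : E ⊆ E' := fun q hq => hP' (Set.mem_insert_of_mem _ hq)
    have hcd : (c, d) ∈ E' := hP' (Set.mem_insert _ _)
    rcases hp with (h | h) | h
    · exact hE' h
    · exact ht' _ _ _ (hE' h.1) (ht' _ _ _ hcd (hE' h.2))
    · exact ht' _ _ _ (hE' h.1) (ht' _ _ _ (hs' _ _ hcd) (hE' h.2))
end
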